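/- (Sandwich principle) Let N be a nonempty finite set and let P′ ⊊ P be two posets on N with P′ strictly contained in P. Then there exists a poset P″ on N with P′ ⊆ P″ ⊊ P and |P \ P″| = 1. -/

import Mathlib

/-- An *enumeration* of a finite set `N`: a bijection `π` from `{1,…,n}` (modeled as
`Fin (Fintype.card N)`) onto `N`. -/
abbrev Enum (N : Type*) [Fintype N] := Fin (Fintype.card N) ≃ N

/-- `P ⊆ N × N` is a *poset on `N`*: a reflexive, antisymmetric and transitive relation. -/
def IsPosetOn {N : Type*} (P : Set (N × N)) : Prop :=
  (∀ u : N, (u, u) ∈ P) ∧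
  (∀ u v : N, (u, v) ∈ P → (v, u) ∈ P → u = v) ∧
  (∀ u v w : N, (u, v) ∈ P → (v, w) ∈ P → (u, w) ∈ P)

/-- The diagonal `Δ = {(u,u) : u ∈ N}`. -/
def diag (N : Type*) : Set (N × N) := {p | p.1 = p.2}

/-- The set `L(T)` of *linear extensions* of a relation `T ⊆ N × N`:
enumerations `π` with `π⁻¹(u) ≤ π⁻¹(v)` for all `(u,v) ∈ T`. -/
def LinExt {N : Type*} [Fintype N] (T : Set (N × N)) : Set (Enum N) :=
  {π | ∀ p ∈ T, π.symm p.1 ≤ π.symm p.2}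

/-- `π` and `σ` differ by the adjacent transposition at positions `i, i+1`. -/
def AdjTranspAt {N : Type*} [Fintype N] (π σ : Enum N) (i : Fin (Fintype.card N))
    (h : (i : ℕ) + 1 < Fintype.card N) : Prop :=
  π i = σ ⟨(i : ℕ) + 1, h⟩ ∧ π ⟨(i : ℕ) + 1, h⟩ = σ i ∧
  ∀ k : Fin (Fintype.card N), k ≠ i → k ≠ ⟨(i : ℕ) + 1, h⟩ → π k = σ k

/-- `π` and `σ` differ by an adjacent transposition. -/
def AdjTransp {N : Type*} [Fintype N] (π σ : Enum N) : Prop :=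
  ∃ i h, AdjTranspAt π σ i h

/-- The *permutohedral graph* over `N`: nodes are the enumerations of `N`, and edges join
enumerations differing by an adjacent transposition. -/
def permGraph (N : Type*) [Fintype N] : SimpleGraph (Enum N) where
  Adj π σ := AdjTransp π σ
  symm := by
    refine ⟨?_⟩
    rintro π σ ⟨i, h, h1, h2, h3⟩
    exact ⟨i, h, h2.symm, h1.symm, fun k hk hk' => (h3 k hk hk').symm⟩
  loopless := by
    refine ⟨?_⟩
    rintro π ⟨i, h, h1, -, -⟩
    have hi : i = ⟨(i : ℕ) + 1, h⟩ := π.injective h1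
    have : (i : ℕ) = (i : ℕ) + 1 := congrArg Fin.val hi
    omega

/-- `π` and `σ` are joined by an edge of the permutohedral graph labeled by `{u,v}`,
i.e. they differ by the adjacent transposition at some `i` with `{π(i), π(i+1)} = {u,v}`. -/
def AdjLabeled {N : Type*} [Fintype N] (π σ : Enum N) (u v : N) : Prop :=
  ∃ i h, AdjTranspAt π σ i h ∧ ({π i, π ⟨(i : ℕ) + 1, h⟩} : Set N) = {u, v}

/-- `Inv[π,σ]`: the set of *inversions* between enumerations `π` and `σ`, i.e. two-element
sets `{u,v} ⊆ N` whose elements occur in opposite mutual order in `π` and `σ`. -/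
def InvBetween {N : Type*} [Fintype N] (π σ : Enum N) : Set (Set N) :=
  {L | ∃ u v : N, L = {u, v} ∧ π.symm u < π.symm v ∧ σ.symm v < σ.symm u}

/-- `Inv(S)`: the set of *inversions within* a set `S` of enumerations: two-element sets
`{u,v} ⊆ N` labeling some edge of the permutohedral graph with both endpoints in `S`. -/
def InvS {N : Type*} [Fintype N] (S : Set (Enum N)) : Set (Set N) :=
  {L | ∃ u v : N, u ≠ v ∧ L = {u, v} ∧ ∃ π ∈ S, ∃ σ ∈ S, AdjLabeled π σ u v}

/-- `Cov(S)`: the *covering relation* for a set `S` of enumerations: pairs `(u,v)` such that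
some edge labeled `{u,v}` joins `π ∈ S` with `σ ∉ S` and `u` strictly precedes `v` in `π`. -/
def CovS {N : Type*} [Fintype N] (S : Set (Enum N)) : Set (N × N) :=
  {p | ∃ π ∈ S, ∃ σ, σ ∉ S ∧ AdjLabeled π σ p.1 p.2 ∧ π.symm p.1 < π.symm p.2}

/-- The transitive closure `tr(R)` of a relation `R ⊆ N × N`. -/
def trCl {N : Type*} (R : Set (N × N)) : Set (N × N) :=
  {p | Relation.TransGen (fun a b => (a, b) ∈ R) p.1 p.2}

/-- `R` is acyclic: no cycle `u_1, …, u_k = u_1` (`k ≥ 2`) with consecutive pairs in `R`;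
equivalently, no `u` with `(u,u)` in the transitive closure of `R`. -/
def Acyclic {N : Type*} (R : Set (N × N)) : Prop :=
  ∀ u : N, ¬ Relation.TransGen (fun a b => (a, b) ∈ R) u u

/-- A set `S` of nodes of the permutohedral graph is *geodetically convex* if for all
`π, σ ∈ S`, every node `τ` lying on a geodesic between `π` and `σ` belongs to `S`. -/
def GeodConvex {N : Type*} [Fintype N] (S : Set (Enum N)) : Prop :=
  ∀ π ∈ S, ∀ σ ∈ S, ∀ τ : Enum N,
    (permGraph N).dist π τ + (permGraph N).dist τ σ = (permGraph N).dist π σ → τ ∈ S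

/-- The *label* on an edge of the permutohedral graph: the (two-element) set of elements of `N`
whose positions differ in the two endpoint enumerations; for an edge given by the adjacent
transposition at `i` this is exactly `{π(i), π(i+1)}`. -/
def edgeLabel {N : Type*} [Fintype N] : Sym2 (Enum N) → Set N :=
  Sym2.lift ⟨fun π σ => {u | π.symm u ≠ σ.symm u}, fun π σ => by
    ext u; simp [ne_comm]⟩

/-- The total order `T_π` on `N` associated with an enumeration `π`. -/
def Tord {N : Type*} [Fintype N] (π : Enum N) : Set (N × N) :=
  {p | π.symm p.1 ≤ π.symm p.2}


private lemma exists_cover {N : Type*} [Fintype N] (P' P : Set (N × N))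
    (hP' : IsPosetOn P') (hP : IsPosetOn P) (hsub : P' ⊆ P) :
    ∀ n : ℕ, ∀ a b : N, (a, b) ∈ P → (a, b) ∉ P' →
      ({c | (a, c) ∈ P ∧ (c, b) ∈ P}).ncard ≤ n →
      ∃ a' b' : N, (a', b') ∈ P ∧ (a', b') ∉ P' ∧
        ∀ c, (a', c) ∈ P → (c, b') ∈ P → c = a' ∨ c = b' := by
  intro n
  induction n with
  | zero =>
    intro a b hab _ hn
    exfalso
    have hb : b ∈ {c | (a, c) ∈ P ∧ (c, b) ∈ P} := ⟨hab, hP.1 b⟩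
    have hfin : ({c | (a, c) ∈ P ∧ (c, b) ∈ P}).Finite := Set.toFinite _
    have := Set.ncard_pos (s := {c | (a, c) ∈ P ∧ (c, b) ∈ P}) hfin
    have hpos : 0 < ({c | (a, c) ∈ P ∧ (c, b) ∈ P}).ncard := this.mpr ⟨b, hb⟩
    omega
  | succ n ih =>
    intro a b hab hab' hn
    by_cases hcov : ∀ c, (a, c) ∈ P → (c, b) ∈ P → c = a ∨ c = b
    · exact ⟨a, b, hab, hab', hcov⟩
    · push_neg at hcov
      obtain ⟨c, hac, hcb, hca, hcb'⟩ := hcov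
      have hab_ne : a ≠ b := fun h => hab' (h ▸ hP'.1 a)
      -- intervals
      have hsub1 : {d | (a, d) ∈ P ∧ (d, c) ∈ P} ⊂ {d | (a, d) ∈ P ∧ (d, b) ∈ P} := by
        constructor
        · rintro d ⟨h1, h2⟩; exact ⟨h1, hP.2.2 _ _ _ h2 hcb⟩
        · intro hcon
          have hb : b ∈ {d | (a, d) ∈ P ∧ (d, b) ∈ P} := ⟨hab, hP.1 b⟩
          have := hcon hb
          exact hcb' (hP.2.1 _ _ hcb this.2)
      have hsub2 : {d | (c, d) ∈ P ∧ (d, b) ∈ P} ⊂ {d | (a, d) ∈ P ∧ (d, b) ∈ P} := by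
        constructor
        · rintro d ⟨h1, h2⟩; exact ⟨hP.2.2 _ _ _ hac h1, h2⟩
        · intro hcon
          have ha : a ∈ {d | (a, d) ∈ P ∧ (d, b) ∈ P} := ⟨hP.1 a, hab⟩
          have := hcon ha
          exact hca (hP.2.1 _ _ this.1 hac)
      have hfin : ({d | (a, d) ∈ P ∧ (d, b) ∈ P}).Finite := Set.toFinite _
      have hlt1 := Set.ncard_lt_ncard hsub1 hfin
      have hlt2 := Set.ncard_lt_ncard hsub2 hfin
      by_cases hac' : (a, c) ∈ P'
      · have hcb'' : (c, b) ∉ P' := fun h => hab' (hP'.2.2 _ _ _ hac' h)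
        exact ih c b hcb hcb'' (by omega)
      · exact ih a c hac hac' (by omega)

/-- **Sandwich principle.** If `P′ ⊊ P` are posets on a nonempty finite set `N`,
then there is a poset `P″` on `N` with `P′ ⊆ P″ ⊊ P` and `|P \ P″| = 1`. -/
theorem stmt3 {N : Type*} [Fintype N] [Nonempty N] (P' P : Set (N × N))
    (hP' : IsPosetOn P') (hP : IsPosetOn P) (hss : P' ⊂ P) :
    ∃ P'' : Set (N × N), IsPosetOn P'' ∧ P' ⊆ P'' ∧ P'' ⊂ P ∧ (P \ P'').ncard = 1 := by
  obtain ⟨hsub, hne⟩ := hss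
  have hne' : ∃ p, p ∈ P ∧ p ∉ P' := by
    by_contra h; push_neg at h; exact hne (fun p hp => h p hp)
  obtain ⟨⟨a0, b0⟩, ha0, ha0'⟩ := hne'
  obtain ⟨a, b, hab, hab', hcov⟩ := exists_cover P' P hP' hP hsub
    (({c | (a0, c) ∈ P ∧ (c, b0) ∈ P}).ncard) a0 b0 ha0 ha0' le_rfl
  have hab_ne : a ≠ b := fun h => hab' (h ▸ hP'.1 a)
  refine ⟨P \ {(a, b)}, ?_, ?_, ?_, ?_⟩
  · refine ⟨fun u => ⟨hP.1 u, ?_⟩, fun u v h1 h2 => hP.2.1 u v h1.1 h2.1, ?_⟩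
    · simp only [Set.mem_singleton_iff, Prod.mk.injEq, not_and]
      intro h1 h2; exact hab_ne (h1.symm.trans h2)
    · rintro u v w ⟨h1, h1'⟩ ⟨h2, h2'⟩
      refine ⟨hP.2.2 _ _ _ h1 h2, ?_⟩
      simp only [Set.mem_singleton_iff, Prod.mk.injEq] at h1' h2' ⊢
      rintro ⟨hu, hw⟩
      subst hu; subst hw
      rcases hcov v h1 h2 with h | h
      · exact h2' ⟨h, rfl⟩
      · exact h1' ⟨rfl, h⟩
  · intro p hp
    refine ⟨hsub hp, ?_⟩
    simp only [Set.mem_singleton_iff]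
    rintro rfl; exact hab' hp
  · constructor
    · exact Set.diff_subset
    · intro hcon
      exact (hcon hab).2 rfl
  · have : P \ (P \ {(a, b)}) = {(a, b)} := by
      ext p
      simp only [Set.mem_diff, Set.mem_singleton_iff]
      constructor
      · rintro ⟨hp, h⟩
        by_contra hne2
        exact h ⟨hp, hne2⟩
      · rintro rfl; exact ⟨hab, fun h => h.2 rfl⟩
    rw [this, Set.ncard_singleton]
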